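/- arXiv:1409.7194 — 2 statements merged into one kernel-verified Lean document; each statement's English description precedes it below -/
import Mathlib

section
/- Let G be a finite abelian group, A ⊆ G symmetric with 0 ∈ A, C ⊆ G, and h : G → ℝ with h(x) ≤ 0 on G\A and ĥ(γ) ≥ 0 for all characters γ. Let Null = {γ : ĥ(γ) = 0}. Suppose K : G → ℂ satisfies Re K(x) ≥ 1 for all x ∈ C, K̂(1) = 0, and K̂(γ) = 0 for all γ ∈ Null, and that ∑_{γ∉Null} |K̂(γ)|²/ĥ(γ) > 0. Then any B ⊆ C with B - B ⊆ (G\A) ∪ {0} satisfies |B| ≤ h(0) / ( ĥ(1) + (∑_{γ∉Null} |K̂(γ)|²/ĥ(γ))⁻¹ ). -/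
/-!
Write `B̂(γ) = ∑_{b ∈ B} γ b`. Expanding, `∑_γ |B̂(γ)|² ĥ(γ) = ∑_{b, b' ∈ B} h(b - b')`, which is
at most `|B| h(0)` because `h ≤ 0` at the nonzero differences. Every term on the left is
nonnegative and the `γ = 1` term is `|B|² ĥ(1)`, so the energy `T` of `B̂` off `Null ∪ {1}` is at
most `|B| h(0) - |B|² ĥ(1)`. By Parseval, `|B| ≤ Re ∑_γ B̂(γ) conj K̂(γ)`, and as `K̂` vanishes on
`Null ∪ {1}`, Cauchy–Schwarz with weights `ĥ` bounds this by `(T Q)^{1/2}`, where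
`Q = ∑_{γ ∉ Null} |K̂(γ)|² / ĥ(γ)`. So `|B|² / Q ≤ T ≤ |B| h(0) - |B|² ĥ(1)`, which rearranges to
the bound.
-/

open Finset ComplexConjugate

theorem Finset.sum_sum_sub_le_card_mul {G : Type*} [AddGroup G] (h : G → ℝ) (B : Finset G)
    (hB : ∀ b ∈ B, ∀ b' ∈ B, b ≠ b' → h (b - b') ≤ 0) :
    ∑ b ∈ B, ∑ b' ∈ B, h (b - b') ≤ #B * h 0 := by
  classical
  have hrow : ∀ b ∈ B, ∑ b' ∈ B, h (b - b') ≤ h 0 := by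
    intro b hb
    rw [← add_sum_erase _ _ hb, sub_self, add_le_iff_nonpos_right]
    exact sum_nonpos fun b' hb' => hB b hb b' (mem_of_mem_erase hb') (ne_of_mem_erase hb').symm
  simpa using sum_le_sum hrow

theorem Finset.sq_sum_mul_le_sum_sq_mul_mul_sum_sq_div {ι : Type*} (s : Finset ι)
    (x y w : ι → ℝ) (hw : ∀ i ∈ s, 0 < w i) :
    (∑ i ∈ s, x i * y i) ^ 2 ≤ (∑ i ∈ s, x i ^ 2 * w i) * ∑ i ∈ s, y i ^ 2 / w i := by
  refine sum_sq_le_sum_mul_sum_of_sq_le_mul s (fun i hi => by have := hw i hi; positivity)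
    (fun i hi => by have := hw i hi; positivity) fun i hi => le_of_eq ?_
  have := (hw i hi).ne'
  field_simp

theorem le_div_add_inv_of_sq_mul_add_le {n c a T Q : ℝ} (hn : 0 ≤ n) (hc : 0 ≤ c) (ha : 0 ≤ a)
    (hQ : 0 < Q) (hE : n ^ 2 * a + T ≤ n * c) (hCS : n ^ 2 ≤ T * Q) : n ≤ c / (a + Q⁻¹) := by
  have hTQ : n ^ 2 * Q⁻¹ ≤ T := by
    rw [← div_eq_mul_inv]
    exact (div_le_iff₀ hQ).2 hCS
  rw [le_div_iff₀ (by positivity)]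
  rcases hn.eq_or_lt with rfl | hn
  · simpa using hc
  · exact le_of_mul_le_mul_left (by linarith) hn

namespace AddChar

variable {G : Type*} [AddCommGroup G] [Fintype G]

noncomputable def fourierCoeff (f : G → ℂ) (γ : AddChar G ℂ) : ℂ :=
  (∑ x, f x * γ x) / Fintype.card G

lemma sum_apply_mul_fourierCoeff (f : G → ℂ) (a : G) :
    ∑ γ : AddChar G ℂ, γ a * fourierCoeff f γ = f (-a) := by
  classical
  have hG : (Fintype.card G : ℂ) ≠ 0 := by simp
  calc ∑ γ : AddChar G ℂ, γ a * fourierCoeff f γ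
      = (∑ x, f x * ∑ γ : AddChar G ℂ, γ (a + x)) / Fintype.card G := by
        simp only [fourierCoeff, mul_div_assoc', ← sum_div, mul_sum, map_add_eq_mul]
        rw [sum_comm]
        congr 1
        exact sum_congr rfl fun x _ => sum_congr rfl fun γ _ => by ring
    _ = f (-a) := by
        simp only [sum_apply_eq_ite, add_eq_zero_iff_eq_neg', mul_ite, mul_zero, sum_ite_eq',
          mem_univ, if_true]
        field_simp

lemma sum_fourierCoeff (f : G → ℂ) : ∑ γ : AddChar G ℂ, fourierCoeff f γ = f 0 := by
  simpa using sum_apply_mul_fourierCoeff f 0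

lemma sum_apply_mul_conj_fourierCoeff (f : G → ℂ) (a : G) :
    ∑ γ : AddChar G ℂ, γ a * conj (fourierCoeff f γ) = conj (f a) := by
  rw [← neg_neg a, ← sum_apply_mul_fourierCoeff f (-a), map_sum, neg_neg]
  simp only [map_mul, map_neg_eq_conj, RCLike.conj_conj]

lemma sum_normSq_mul_fourierCoeff_re (B : Finset G) (f : G → ℂ) :
    ∑ γ : AddChar G ℂ, Complex.normSq (∑ b ∈ B, γ b) * (fourierCoeff f γ).re
      = ∑ b ∈ B, ∑ b' ∈ B, (f (b - b')).re := by
  have hexpand (γ : AddChar G ℂ) : (Complex.normSq (∑ b ∈ B, γ b) : ℂ) * fourierCoeff f γ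
      = ∑ b ∈ B, ∑ b' ∈ B, γ (b' - b) * fourierCoeff f γ := by
    rw [Complex.normSq_eq_conj_mul_self, map_sum, sum_mul_sum, sum_mul]
    refine sum_congr rfl fun b _ => ?_
    rw [sum_mul]
    refine sum_congr rfl fun b' _ => ?_
    rw [sub_eq_neg_add, map_add_eq_mul, map_neg_eq_conj]
  simp only [← Complex.re_ofReal_mul, ← Complex.re_sum, hexpand]
  rw [sum_comm]
  simp only [sum_comm (s := (univ : Finset (AddChar G ℂ))), sum_apply_mul_fourierCoeff, neg_sub]

lemma card_le_sum_norm_mul_norm_fourierCoeff (B : Finset G) (K : G → ℂ)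
    (hK : ∀ b ∈ B, 1 ≤ (K b).re) (s : Finset (AddChar G ℂ))
    (hs : ∀ γ ∉ s, fourierCoeff K γ = 0) :
    (#B : ℝ) ≤ ∑ γ ∈ s, ‖∑ b ∈ B, γ b‖ * ‖fourierCoeff K γ‖ := by
  have hcorr : ∑ γ ∈ s, (∑ b ∈ B, γ b) * conj (fourierCoeff K γ) = ∑ b ∈ B, conj (K b) := by
    rw [sum_subset (subset_univ s) fun γ _ hγ => by simp [hs γ hγ]]
    simp only [sum_mul, sum_comm (s := (univ : Finset (AddChar G ℂ))),
      sum_apply_mul_conj_fourierCoeff]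
  calc (#B : ℝ) ≤ ∑ b ∈ B, (K b).re := by simpa using sum_le_sum hK
    _ = (∑ γ ∈ s, (∑ b ∈ B, γ b) * conj (fourierCoeff K γ)).re := by
        simp [hcorr, Complex.re_sum]
    _ ≤ ∑ γ ∈ s, ‖∑ b ∈ B, γ b‖ * ‖fourierCoeff K γ‖ := by
        rw [Complex.re_sum]
        gcongr with γ
        simpa using Complex.re_le_norm ((∑ b ∈ B, γ b) * conj (fourierCoeff K γ))

lemma card_sq_le_sum_normSq_mul_mul_sum_normSq_div (B : Finset G) (K : G → ℂ)
    (hK : ∀ b ∈ B, 1 ≤ (K b).re) (s : Finset (AddChar G ℂ))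
    (hs : ∀ γ ∉ s, fourierCoeff K γ = 0) (w : AddChar G ℂ → ℝ) (hw : ∀ γ ∈ s, 0 < w γ) :
    (#B : ℝ) ^ 2 ≤ (∑ γ ∈ s, Complex.normSq (∑ b ∈ B, γ b) * w γ) *
      ∑ γ ∈ s, Complex.normSq (fourierCoeff K γ) / w γ := by
  have hcorr := card_le_sum_norm_mul_norm_fourierCoeff B K hK s hs
  simpa only [Complex.sq_norm] using (pow_le_pow_left₀ (Nat.cast_nonneg _) hcorr 2).trans
    (sq_sum_mul_le_sum_sq_mul_mul_sum_sq_div s _ _ w hw)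

lemma re_apply_zero_nonneg (f : G → ℂ)
    (hpd : ∀ γ : AddChar G ℂ, 0 ≤ (fourierCoeff f γ).re) : 0 ≤ (f 0).re := by
  rw [← sum_fourierCoeff f, Complex.re_sum]
  exact sum_nonneg fun γ _ => hpd γ

lemma card_sq_mul_add_sum_normSq_mul_le [DecidableEq (AddChar G ℂ)] (f : G → ℂ) (B : Finset G)
    (hpd : ∀ γ : AddChar G ℂ, 0 ≤ (fourierCoeff f γ).re)
    (hB : ∀ b ∈ B, ∀ b' ∈ B, b ≠ b' → (f (b - b')).re ≤ 0) (s : Finset (AddChar G ℂ)) :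
    (#B : ℝ) ^ 2 * (fourierCoeff f 1).re +
        ∑ γ ∈ s.erase 1, Complex.normSq (∑ b ∈ B, γ b) * (fourierCoeff f γ).re
      ≤ #B * (f 0).re := by
  calc _ = ∑ γ ∈ insert 1 (s.erase 1),
          Complex.normSq (∑ b ∈ B, γ b) * (fourierCoeff f γ).re := by
        rw [sum_insert (notMem_erase 1 s)]
        simp [sq]
    _ ≤ ∑ γ : AddChar G ℂ, Complex.normSq (∑ b ∈ B, γ b) * (fourierCoeff f γ).re :=
        sum_le_sum_of_subset_of_nonneg (subset_univ _) fun γ _ _ =>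
          mul_nonneg (Complex.normSq_nonneg _) (hpd γ)
    _ ≤ #B * (f 0).re := by
        rw [sum_normSq_mul_fourierCoeff_re]
        exact sum_sum_sub_le_card_mul (fun x => (f x).re) B hB

end AddChar

open AddChar in
theorem improved_delsarte_bound_general {G : Type*} [AddCommGroup G] [Fintype G]
    (A C : Finset G)
    (h : G → ℝ) (K : G → ℂ)
    -- Fourier transforms
    (H : AddChar G ℂ → ℂ) (Kf : AddChar G ℂ → ℂ)
    (hH : ∀ γ : AddChar G ℂ, H γ = (∑ x : G, (h x : ℂ) * γ x) / (Fintype.card G : ℂ))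
    (hKf : ∀ γ : AddChar G ℂ, Kf γ = (∑ x : G, K x * γ x) / (Fintype.card G : ℂ))
    (hneg : ∀ x : G, x ∉ A → h x ≤ 0)
    (hft : ∀ γ : AddChar G ℂ, 0 ≤ (H γ).re ∧ (H γ).im = 0)
    (hKC : ∀ x ∈ C, 1 ≤ (K x).re)
    (hK1 : Kf (1 : AddChar G ℂ) = 0)
    (hKnull : ∀ γ : AddChar G ℂ, H γ = 0 → Kf γ = 0)
    (hSpos : 0 < ∑ γ ∈ Finset.univ.filter (fun γ : AddChar G ℂ => H γ ≠ 0),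
      Complex.normSq (Kf γ) / (H γ).re)
    (B : Finset G) (hBC : B ⊆ C)
    (hB : ∀ b ∈ B, ∀ b' ∈ B, b - b' ∉ A ∨ b - b' = 0) :
    (B.card : ℝ) ≤
      h 0 / ((H (1 : AddChar G ℂ)).re +
        (∑ γ ∈ Finset.univ.filter (fun γ : AddChar G ℂ => H γ ≠ 0),
          Complex.normSq (Kf γ) / (H γ).re)⁻¹) := by
  classical
  obtain rfl : H = fourierCoeff (fun x => (h x : ℂ)) := funext hH
  obtain rfl : Kf = fourierCoeff K := funext hKf
  set ĥ := fourierCoeff (fun x => (h x : ℂ))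
  set S := univ.filter (fun γ : AddChar G ℂ => ĥ γ ≠ 0)
  have hpos : ∀ γ ∈ S, 0 < (ĥ γ).re := fun γ hγ =>
    (hft γ).1.lt_of_ne fun h0 => (mem_filter.1 hγ).2 (Complex.ext h0.symm (hft γ).2)
  have hdiff : ∀ b ∈ B, ∀ b' ∈ B, b ≠ b' → h (b - b') ≤ 0 := fun b hb b' hb' hne =>
    (hB b hb b' hb').elim (hneg _) fun h0 => absurd (sub_eq_zero.1 h0) hne
  have hsupp : ∀ γ ∉ S.erase 1, fourierCoeff K γ = 0 := fun γ hγ => by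
    by_cases hγ1 : γ = 1
    · exact hγ1 ▸ hK1
    · exact hKnull γ (by simpa [S, hγ1] using hγ)
  have cs := card_sq_le_sum_normSq_mul_mul_sum_normSq_div B K (fun b hb => hKC b (hBC hb)) _
    hsupp (fun γ => (ĥ γ).re) fun γ hγ => hpos γ (mem_of_mem_erase hγ)
  rw [sum_erase (f := fun γ => Complex.normSq (fourierCoeff K γ) / (ĥ γ).re) _ (by simp [hK1])]
    at cs
  exact le_div_add_inv_of_sq_mul_add_le (Nat.cast_nonneg _) (re_apply_zero_nonneg _ (hft · |>.1))
    (hft 1).1 hSpos (card_sq_mul_add_sum_normSq_mul_le _ B (hft · |>.1) hdiff S) cs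

/-- Improved Delsarte bound using a second witness function `K` supported
(in Fourier) off the null set of `ĥ`. -/
theorem improved_delsarte_bound {G : Type*} [AddCommGroup G] [Fintype G] [DecidableEq G]
    [DecidableEq (AddChar G ℂ)]
    (A C : Finset G) (hA0 : (0 : G) ∈ A) (hAsymm : ∀ x ∈ A, -x ∈ A)
    (h : G → ℝ) (K : G → ℂ)
    -- Fourier transforms
    (H : AddChar G ℂ → ℂ) (Kf : AddChar G ℂ → ℂ)
    (hH : ∀ γ : AddChar G ℂ, H γ = (∑ x : G, (h x : ℂ) * γ x) / (Fintype.card G : ℂ))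
    (hKf : ∀ γ : AddChar G ℂ, Kf γ = (∑ x : G, K x * γ x) / (Fintype.card G : ℂ))
    (hneg : ∀ x : G, x ∉ A → h x ≤ 0)
    (hft : ∀ γ : AddChar G ℂ, 0 ≤ (H γ).re ∧ (H γ).im = 0)
    (hKC : ∀ x ∈ C, 1 ≤ (K x).re)
    (hK1 : Kf (1 : AddChar G ℂ) = 0)
    (hKnull : ∀ γ : AddChar G ℂ, H γ = 0 → Kf γ = 0)
    (hSpos : 0 < ∑ γ ∈ Finset.univ.filter (fun γ : AddChar G ℂ => H γ ≠ 0),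
      Complex.normSq (Kf γ) / (H γ).re)
    (B : Finset G) (hBC : B ⊆ C)
    (hB : ∀ b ∈ B, ∀ b' ∈ B, b - b' ∉ A ∨ b - b' = 0) :
    (B.card : ℝ) ≤
      h 0 / ((H (1 : AddChar G ℂ)).re +
        (∑ γ ∈ Finset.univ.filter (fun γ : AddChar G ℂ => H γ ≠ 0),
          Complex.normSq (Kf γ) / (H γ).re)⁻¹) :=
  improved_delsarte_bound_general A C h K H Kf hH hKf hneg hft hKC hK1 hKnull hSpos B hBC hB
end

section
/- For any z = (z↑, z↓) ∈ 𝕋⁶ unbiased to all six columns of F^T(a,b) (a, b ∈ 𝕋), the value K(z) = (1/486)·∑_{j=0}^{2}(⟨z↑, f_j⟩·⟨c_j f_j, z↓⟩)² is a real number satisfying K(z) < −1/30. -/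
open Finset

noncomputable def omega3 : ℂ := Complex.exp (2 * Real.pi * Complex.I / 3)

noncomputable def fvec : Fin 3 → Fin 3 → ℂ :=
  ![![1, 1, 1], ![1, omega3, (starRingEnd ℂ) omega3], ![1, (starRingEnd ℂ) omega3, omega3]]

/-- The parameters `(c₀,c₁,c₂) = (1,a,b)`. -/
noncomputable def cpar (a b : ℂ) : Fin 3 → ℂ := ![1, a, b]

/-- The columns of `F^T(a,b)`: `(f_j, ±c_j f_j)` for `j = 0,1,2`. -/
noncomputable def FTcol (a b : ℂ) (j : Fin 3) (ε : Bool) : Fin 6 → ℂ :=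
  Fin.append (fvec j) (fun i => (if ε then 1 else -1) * cpar a b j * fvec j i)

/-- The second witness function
`K(z) = (1/486)·∑_j (⟨z↑,f_j⟩·⟨c_j f_j, z↓⟩)²`. -/
noncomputable def Kfun (a b : ℂ) (zu zd : Fin 3 → ℂ) : ℂ :=
  (1 / 486) * ∑ j : Fin 3,
    ((∑ i : Fin 3, zu i * (starRingEnd ℂ) (fvec j i)) *
      (∑ i : Fin 3, cpar a b j * fvec j i * (starRingEnd ℂ) (zd i))) ^ 2

/-!
Write `s_j = |⟨z↑,f_j⟩|²`, `t_j = |⟨z↓,f_j⟩|²`. Unbiasedness to `(f_j, ±c_j f_j)` says exactly that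
`s_j + t_j = 6` and that `⟨z↑,f_j⟩⟨c_j f_j,z↓⟩` is purely imaginary, so its square is `-s_j t_j`.
For unimodular `z`, `s_j = 3 + 2 Re(ω^j S)` with `S = z₀z̄₁ + z₁z̄₂ + z₂z̄₀`; hence `∑ s_j = 9`,
`∑ s_j² = 27 + 6|S|²` and `K(z) = (2|S|² - 9)/162`. The relations `s_j + t_j = 6` force
`S(z↓) = -S(z↑)`. Being a sum of three unit numbers with product `1`, `S` lies inside Steiner's
deltoid `|S|⁴ + 18|S|² - 8 Re S³ - 27 ≤ 0`; adding this for `S` and `-S` cancels the cubic term,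
so `|S|⁴ + 18|S|² ≤ 27`, i.e. `|S|² ≤ 6√3 - 9 < 9/5`, and `K(z) < -1/30`.
-/

open Complex ComplexConjugate

theorem omega3_eq : omega3 = ⟨-1 / 2, √3 / 2⟩ := by
  have h : omega3 = exp ((2 * Real.pi / 3 : ℝ) * I) := by
    rw [omega3]; push_cast; ring_nf
  have hθ : 2 * Real.pi / 3 = Real.pi - Real.pi / 3 := by ring
  apply Complex.ext
  · rw [h, exp_ofReal_mul_I_re, hθ, Real.cos_pi_sub, Real.cos_pi_div_three]; norm_num
  · rw [h, exp_ofReal_mul_I_im, hθ, Real.sin_pi_sub, Real.sin_pi_div_three]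

theorem omega3_sq : omega3 ^ 2 = conj omega3 := by
  have h3 : √3 ^ 2 = 3 := Real.sq_sqrt (by norm_num)
  apply Complex.ext <;> simp [omega3_eq, sq] <;> nlinarith

theorem omega3_pow_three : omega3 ^ 3 = 1 := by
  rw [omega3, ← Complex.exp_nat_mul, ← Complex.exp_two_pi_mul_I]
  push_cast; ring_nf

theorem norm_omega3 : ‖omega3‖ = 1 :=
  (pow_eq_one_iff_of_nonneg (norm_nonneg _) three_ne_zero).1 (by
    rw [← norm_pow, omega3_pow_three, norm_one])

theorem norm_fvec (j i : Fin 3) : ‖fvec j i‖ = 1 := by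
  fin_cases j <;> fin_cases i <;> simp [fvec, norm_omega3]

theorem conj_fvec_mul_fvec_add_one (j i : Fin 3) :
    conj (fvec j i) * fvec j (i + 1) = omega3 ^ (j : ℕ) := by
  have h3 := omega3_pow_three
  fin_cases j <;> fin_cases i <;> simp [fvec, ← omega3_sq] <;>
    first | ring1 | linear_combination omega3 * h3 | linear_combination omega3 ^ 2 * h3

theorem re_omega3_mul (x : ℂ) : (omega3 * x).re = -(x.re + √3 * x.im) / 2 := by
  simp [omega3_eq, mul_re]
  ring

theorem re_omega3_sq_mul (x : ℂ) : (omega3 ^ 2 * x).re = -(x.re - √3 * x.im) / 2 := by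
  rw [omega3_sq]
  simp [omega3_eq, mul_re]
  ring

theorem eq_zero_of_re_eq_zero_of_re_omega3_mul_eq_zero {x : ℂ} (h₀ : x.re = 0)
    (h₁ : (omega3 * x).re = 0) : x = 0 := by
  rw [re_omega3_mul, h₀] at h₁
  have him : x.im = 0 := by simpa using h₁
  exact Complex.ext h₀ him

theorem normSq_sum_three_of_norm_eq_one (a : Fin 3 → ℂ) (ha : ∀ i, ‖a i‖ = 1) :
    normSq (∑ i, a i) = 3 + 2 * (∑ i, a i * conj (a (i + 1))).re := by
  have h : ∀ i, normSq (a i) = 1 := fun i => by rw [normSq_eq_norm_sq, ha i, one_pow]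
  simp [Fin.sum_univ_three, normSq_add, h, add_mul, mul_re, conj_re, conj_im]
  ring

/-- The paper's `⟨z, f_j⟩`. -/
noncomputable def innerFvec (z : Fin 3 → ℂ) (j : Fin 3) : ℂ := ∑ i, z i * conj (fvec j i)

noncomputable def cycSum (z : Fin 3 → ℂ) : ℂ := ∑ i : Fin 3, z i * conj (z (i + 1))

theorem normSq_innerFvec {z : Fin 3 → ℂ} (hz : ∀ i, ‖z i‖ = 1) (j : Fin 3) :
    normSq (innerFvec z j) = 3 + 2 * (omega3 ^ (j : ℕ) * cycSum z).re := by
  rw [innerFvec, normSq_sum_three_of_norm_eq_one _ fun i => by simp [hz, norm_fvec], cycSum,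
    mul_sum]
  congr 3
  refine sum_congr rfl fun i _ => ?_
  rw [← conj_fvec_mul_fvec_add_one j i, map_mul, conj_conj]
  ring

theorem sum_normSq_innerFvec {z : Fin 3 → ℂ} (hz : ∀ i, ‖z i‖ = 1) :
    ∑ j, normSq (innerFvec z j) = 9 := by
  simp only [Fin.sum_univ_three, normSq_innerFvec hz, Fin.val_zero, Fin.val_one, Fin.val_two,
    pow_zero, pow_one, one_mul, re_omega3_mul, re_omega3_sq_mul]
  ring

theorem sum_normSq_innerFvec_sq {z : Fin 3 → ℂ} (hz : ∀ i, ‖z i‖ = 1) :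
    ∑ j, normSq (innerFvec z j) ^ 2 = 27 + 6 * normSq (cycSum z) := by
  have h3 : √3 ^ 2 = 3 := Real.sq_sqrt (by norm_num)
  simp only [Fin.sum_univ_three, normSq_innerFvec hz, Fin.val_zero, Fin.val_one, Fin.val_two,
    pow_zero, pow_one, one_mul, re_omega3_mul, re_omega3_sq_mul, normSq_apply]
  linear_combination (2 * (cycSum z).im ^ 2) * h3

theorem conj_eq_mul_of_norm_eq_one {p q r : ℂ} (hp : ‖p‖ = 1) (hpqr : p * q * r = 1) :
    conj p = q * r := by
  have h : p * conj p = 1 := by rw [mul_conj, normSq_eq_norm_sq, hp]; norm_num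
  linear_combination (-conj p) * hpqr + (q * r) * h

/-- Its zero set is Steiner's deltoid. -/
noncomputable def deltoidPoly (s : ℂ) : ℝ := normSq s ^ 2 + 18 * normSq s - 8 * (s ^ 3).re - 27

/-- `deltoidPoly (p + q + r)` is the discriminant of `(X - p) (X - q) (X - r)`, whose coefficients
are `1, -s, conj s, -1` when `p, q, r` are unimodular with product `1`. -/
theorem deltoidPoly_add_add {p q r : ℂ} (hp : ‖p‖ = 1) (hq : ‖q‖ = 1)
    (hr : ‖r‖ = 1) (hpqr : p * q * r = 1) :
    deltoidPoly (p + q + r) = -(normSq (p - q) * normSq (q - r) * normSq (r - p)) := by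
  have hcp := conj_eq_mul_of_norm_eq_one hp hpqr
  have hcq := conj_eq_mul_of_norm_eq_one hq (by linear_combination hpqr : q * r * p = 1)
  have hcr := conj_eq_mul_of_norm_eq_one hr (by linear_combination hpqr : r * p * q = 1)
  apply Complex.ofReal_injective
  rw [deltoidPoly]
  push_cast
  simp only [← mul_conj, re_eq_add_conj, map_add, map_sub, map_pow, hcp, hcq, hcr]
  linear_combination (4 * (p + q + r) ^ 3 - 18 * (p + q + r) * (p * q + q * r + r * p)
    + 27 * (1 + p * q * r) - ((p - q) * (q - r) * (r - p)) ^ 2) * hpqr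

theorem deltoidPoly_cycSum_nonpos {z : Fin 3 → ℂ} (hz : ∀ i, ‖z i‖ = 1) :
    deltoidPoly (cycSum z) ≤ 0 := by
  have hu : ∀ i k, ‖z i * conj (z k)‖ = 1 := fun i k => by simp [hz]
  have hprod : z 0 * conj (z 1) * (z 1 * conj (z 2)) * (z 2 * conj (z 0)) = 1 := by
    have h : ∀ i, z i * conj (z i) = 1 := fun i => by
      rw [mul_conj, normSq_eq_norm_sq, hz i]; norm_num
    linear_combination (z 1 * conj (z 1) * (z 2 * conj (z 2))) * h 0
      + z 2 * conj (z 2) * h 1 + h 2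
  have hS : cycSum z = z 0 * conj (z 1) + z 1 * conj (z 2) + z 2 * conj (z 0) := by
    simp [cycSum, Fin.sum_univ_three]
  rw [hS, deltoidPoly_add_add (hu 0 1) (hu 1 2) (hu 2 0) hprod, neg_nonpos]
  exact mul_nonneg (mul_nonneg (normSq_nonneg _) (normSq_nonneg _)) (normSq_nonneg _)

theorem deltoidPoly_add_deltoidPoly_neg (s : ℂ) :
    deltoidPoly s + deltoidPoly (-s) = 2 * (normSq s ^ 2 + 18 * normSq s - 27) := by
  have h : (-s) ^ 3 = -s ^ 3 := by ring
  simp only [deltoidPoly, normSq_neg, h, neg_re]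
  ring

theorem normSq_add_normSq_eq_and_re_mul_conj_eq_zero {u v : ℂ} {c : ℝ}
    (h_add : normSq (u + v) = c) (h_sub : normSq (u - v) = c) :
    normSq u + normSq v = c ∧ (u * conj v).re = 0 := by
  rw [normSq_add] at h_add
  rw [normSq_sub] at h_sub
  constructor <;> linarith

theorem sq_eq_neg_normSq_of_re_eq_zero {w : ℂ} (h : w.re = 0) : w ^ 2 = -(normSq w : ℂ) := by
  apply Complex.ext <;> simp [sq, normSq_apply, h]

theorem sum_append_mul_conj_FTcol (a b : ℂ) (zu zd : Fin 3 → ℂ) (j : Fin 3) (ε : Bool) :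
    ∑ i, Fin.append zu zd i * conj (FTcol a b j ε i)
      = innerFvec zu j + (if ε then 1 else -1) * (conj (cpar a b j) * innerFvec zd j) := by
  refine (Fin.sum_univ_add (a := 3) (b := 3) _).trans ?_
  simp only [FTcol, Fin.append_left, Fin.append_right, innerFvec, map_mul, mul_sum]
  congr 1
  refine sum_congr rfl fun i _ => ?_
  cases ε <;> simp <;> ring

theorem Kfun_eq_sum_sq (a b : ℂ) (zu zd : Fin 3 → ℂ) :
    Kfun a b zu zd
      = 1 / 486 * ∑ j, (innerFvec zu j * (cpar a b j * conj (innerFvec zd j))) ^ 2 := by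
  simp only [Kfun, innerFvec, map_sum, map_mul, conj_conj, mul_sum]
  congr! 4 with j _ i _
  ring

theorem cycSum_eq_neg_of_normSq_innerFvec_add {zu zd : Fin 3 → ℂ} (hzu : ∀ i, ‖zu i‖ = 1)
    (hzd : ∀ i, ‖zd i‖ = 1) (h : ∀ j, normSq (innerFvec zu j) + normSq (innerFvec zd j) = 6) :
    cycSum zd = -cycSum zu := by
  have h₀ := h 0
  have h₁ := h 1
  simp only [normSq_innerFvec hzu, normSq_innerFvec hzd, Fin.val_zero, Fin.val_one, pow_zero,
    pow_one, one_mul] at h₀ h₁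
  rw [eq_neg_iff_add_eq_zero, add_comm]
  apply eq_zero_of_re_eq_zero_of_re_omega3_mul_eq_zero <;> simp only [add_re, mul_add] <;> linarith

theorem normSq_cycSum_sq_add_le {zu zd : Fin 3 → ℂ} (hzu : ∀ i, ‖zu i‖ = 1)
    (hzd : ∀ i, ‖zd i‖ = 1) (h : ∀ j, normSq (innerFvec zu j) + normSq (innerFvec zd j) = 6) :
    normSq (cycSum zu) ^ 2 + 18 * normSq (cycSum zu) ≤ 27 := by
  have hsum := deltoidPoly_add_deltoidPoly_neg (cycSum zu)
  rw [← cycSum_eq_neg_of_normSq_innerFvec_add hzu hzd h] at hsum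
  linarith [deltoidPoly_cycSum_nonpos hzu, deltoidPoly_cycSum_nonpos hzd]

theorem Kfun_eq_of_unbiased {a b : ℂ} {zu zd : Fin 3 → ℂ} (hc : ∀ j, ‖cpar a b j‖ = 1)
    (hzu : ∀ i, ‖zu i‖ = 1)
    (h : ∀ j, normSq (innerFvec zu j) + normSq (innerFvec zd j) = 6)
    (hre : ∀ j, (innerFvec zu j * (cpar a b j * conj (innerFvec zd j))).re = 0) :
    Kfun a b zu zd = ((2 * normSq (cycSum zu) - 9) / 162 : ℝ) := by
  have hterm : ∀ j, (innerFvec zu j * (cpar a b j * conj (innerFvec zd j))) ^ 2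
      = ((normSq (innerFvec zu j) ^ 2 - 6 * normSq (innerFvec zu j) : ℝ) : ℂ) := fun j => by
    rw [sq_eq_neg_normSq_of_re_eq_zero (hre j), normSq_mul, normSq_mul, normSq_conj,
      normSq_eq_norm_sq (cpar a b j), hc j, ← h j]
    push_cast; ring
  simp only [Kfun_eq_sum_sq, hterm, ← ofReal_sum, sum_sub_distrib, ← mul_sum,
    sum_normSq_innerFvec hzu, sum_normSq_innerFvec_sq hzu]
  push_cast; ring

/-- For any `z = (z↑,z↓) ∈ 𝕋⁶` unbiased to all six columns of `F^T(a,b)`,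
`K(z)` is real and `K(z) < -1/30`. -/
theorem Kfun_lt_of_unbiased (a b : ℂ) (ha : ‖a‖ = 1) (hb : ‖b‖ = 1)
    (zu zd : Fin 3 → ℂ)
    (hzu : ∀ i : Fin 3, ‖zu i‖ = 1) (hzd : ∀ i : Fin 3, ‖zd i‖ = 1)
    (hunb : ∀ (j : Fin 3) (ε : Bool),
      Complex.normSq (∑ i : Fin 6, Fin.append zu zd i * (starRingEnd ℂ) (FTcol a b j ε i)) = 6) :
    (Kfun a b zu zd).im = 0 ∧ (Kfun a b zu zd).re < -1 / 30 := by
  have hc : ∀ j, ‖cpar a b j‖ = 1 := fun j => by fin_cases j <;> simp [cpar, ha, hb]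
  have hcol : ∀ j, normSq (innerFvec zu j) + normSq (innerFvec zd j) = 6 ∧
      (innerFvec zu j * (cpar a b j * conj (innerFvec zd j))).re = 0 := fun j => by
    have h := normSq_add_normSq_eq_and_re_mul_conj_eq_zero
      (u := innerFvec zu j) (v := conj (cpar a b j) * innerFvec zd j)
      (by simpa [sum_append_mul_conj_FTcol] using hunb j true)
      (by simpa [sum_append_mul_conj_FTcol, sub_eq_add_neg] using hunb j false)
    simpa [normSq_mul, normSq_eq_norm_sq (cpar a b j), hc j] using h
  have hsum := fun j => (hcol j).1
  rw [Kfun_eq_of_unbiased hc hzu hsum fun j => (hcol j).2, ofReal_im, ofReal_re]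
  refine ⟨rfl, ?_⟩
  nlinarith [normSq_cycSum_sq_add_le hzu hzd hsum, normSq_nonneg (cycSum zu)]
end
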